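/- arXiv:1206.3031 — 2 statements merged into one kernel-verified Lean document; each statement's English description precedes it below -/
import Mathlib

section
/- Let p, q be probability distributions on a finite set U with p_u > 0 for all u, and suppose q_u = p_u − τ D_u for all u, where 0 ≤ τ ≤ 1 and D : U → ℝ. Then d²_H(p,q) ≤ τ² ∑_{u∈U} D_u²/p_u. -/
/-!
Since `√(1 + y) ≥ 1 + y/2 - y²/2`, each term `√(p_u q_u) = p_u √(1 + (q_u - p_u)/p_u)` is at least
`p_u + (q_u - p_u)/2 - (q_u - p_u)²/(2 p_u)`. Summing, the linear terms cancel because `p` and `q`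
have the same total mass, so the squared Hellinger distance is at most the `χ²`-divergence
`∑ (q_u - p_u)²/p_u`, which equals `τ² ∑ D_u²/p_u`.
-/

open Finset

-- For `y < -1` the right side is `Real.sqrt`'s junk value `0` and the left side is negative.
lemma one_add_half_sub_sq_half_le_sqrt_one_add (y : ℝ) :
    1 + y / 2 - y ^ 2 / 2 ≤ √(1 + y) := by
  rcases le_or_gt (-1) y with hy | hy
  · have hsq := Real.sq_sqrt (by linarith : (0 : ℝ) ≤ 1 + y)
    have hs := Real.sqrt_nonneg (1 + y)
    nlinarith [mul_nonneg (mul_nonneg hs (sq_nonneg (√(1 + y) - 1)))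
      (by linarith : (0 : ℝ) ≤ √(1 + y) + 2)]
  · nlinarith [Real.sqrt_nonneg (1 + y)]

lemma add_half_sub_sq_div_le_sqrt_mul {a : ℝ} (ha : 0 < a) (b : ℝ) :
    a + (b - a) / 2 - (b - a) ^ 2 / (2 * a) ≤ √(a * b) := by
  have hsqrt : √(a * b) = a * √(1 + (b - a) / a) := by
    rw [show a * b = a ^ 2 * (1 + (b - a) / a) by field_simp; ring,
      Real.sqrt_mul (sq_nonneg a), Real.sqrt_sq ha.le]
  calc a + (b - a) / 2 - (b - a) ^ 2 / (2 * a)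
      = a * (1 + (b - a) / a / 2 - ((b - a) / a) ^ 2 / 2) := by field_simp
    _ ≤ a * √(1 + (b - a) / a) :=
        mul_le_mul_of_nonneg_left (one_add_half_sub_sq_half_le_sqrt_one_add _) ha.le
    _ = √(a * b) := hsqrt.symm

lemma two_mul_one_sub_sum_sqrt_mul_le_sum_sq_sub_div {U : Type*} [Fintype U] {p q : U → ℝ}
    (hp : ∀ u, 0 < p u) (hp1 : ∑ u, p u = 1) (hq1 : ∑ u, q u = 1) :
    2 * (1 - ∑ u, √(p u * q u)) ≤ ∑ u, (q u - p u) ^ 2 / p u := by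
  have hpointwise : ∑ u, (p u + (q u - p u) / 2 - (q u - p u) ^ 2 / (2 * p u))
      ≤ ∑ u, √(p u * q u) :=
    sum_le_sum fun u _ => add_half_sub_sq_div_le_sqrt_mul (hp u) (q u)
  have hlinear : ∑ u, (q u - p u) / 2 = 0 := by
    rw [← sum_div, sum_sub_distrib, hp1, hq1, sub_self, zero_div]
  have hquadratic : ∑ u, (q u - p u) ^ 2 / (2 * p u) = (∑ u, (q u - p u) ^ 2 / p u) / 2 := by
    rw [sum_div]
    exact sum_congr rfl fun u _ => by rw [mul_comm, ← div_div]
  rw [sum_sub_distrib, sum_add_distrib, hp1, hlinear, hquadratic] at hpointwise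
  linarith

theorem hellinger_sq_le_tau_sq_general {U : Type*} [Fintype U]
    (p q : U → ℝ) (D : U → ℝ) (τ : ℝ)
    (hp : ∀ u, 0 < p u)
    (hp1 : ∑ u, p u = 1) (hq1 : ∑ u, q u = 1)
    (hqD : ∀ u, q u = p u - τ * D u) :
    2 * (1 - ∑ u, Real.sqrt (p u * q u)) ≤ τ ^ 2 * ∑ u, (D u) ^ 2 / p u := by
  calc 2 * (1 - ∑ u, √(p u * q u))
      ≤ ∑ u, (q u - p u) ^ 2 / p u := two_mul_one_sub_sum_sqrt_mul_le_sum_sq_sub_div hp hp1 hq1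
    _ = τ ^ 2 * ∑ u, D u ^ 2 / p u := by
        rw [mul_sum]
        exact sum_congr rfl fun u _ => by rw [hqD u, mul_div_assoc']; ring

theorem hellinger_sq_le_tau_sq {U : Type*} [Fintype U]
    (p q : U → ℝ) (D : U → ℝ) (τ : ℝ)
    (hp : ∀ u, 0 < p u) (hq : ∀ u, 0 ≤ q u)
    (hp1 : ∑ u, p u = 1) (hq1 : ∑ u, q u = 1)
    (hτ0 : 0 ≤ τ) (hτ1 : τ ≤ 1)
    (hqD : ∀ u, q u = p u - τ * D u) :
    2 * (1 - ∑ u, Real.sqrt (p u * q u)) ≤ τ ^ 2 * ∑ u, (D u) ^ 2 / p u :=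
  hellinger_sq_le_tau_sq_general p q D τ hp hp1 hq1 hqD
end

section
/- Let Q be the rate matrix of a reversible, irreducible continuous-time Markov chain on a finite state space with stationary distribution π. Then the 'agreement probability' e(t) = ∑_i π_i P(Y_t = i | Y_0 = i) can be written as e(t) = ∑_i π_i² + ∑_{m≥2} c_m e^{−λ_m t}, where 0 < λ_2 ≤ λ_3 ≤ … are the nonzero eigenvalues of −Q (suitably symmetrized) and c_m ≥ 0 with c_2 > 0; consequently e is strictly decreasing in t. -/
/-!
Conjugating `Q` by `D = diagonal √π` gives a matrix `A` that is symmetric by reversibility and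
whose exponentials have the same diagonal as those of `Q`, so the spectral theorem for `A` writes
`e t = ∑ₘ wₘ exp (t μₘ)` with weights `wₘ = ∑ᵢ πᵢ bₘ(i)² > 0`. For an eigenvector `b` of `A` with
eigenvalue `μ`, `D⁻¹ b` is an eigenvector of the strictly positive stochastic matrix `exp Q` with
eigenvalue `exp μ`; the maximum principle gives `exp μ ≤ 1`, and `D⁻¹ b` constant when `μ = 0`.
Hence `0` is a simple eigenvalue, with eigenvector `√π` and weight `∑ᵢ πᵢ²`, and all other
eigenvalues are negative.
-/

open NormedSpace Matrix Finset

namespace Matrix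

variable {n : Type*} [Fintype n] [DecidableEq n]

theorem exp_mulVec_of_mulVec_eq_smul {A : Matrix n n ℝ} {v : n → ℝ} {μ : ℝ}
    (h : A *ᵥ v = μ • v) : exp A *ᵥ v = Real.exp μ • v := by
  open scoped Norms.Operator in
  have hA := (exp_series_hasSum_exp' (𝕂 := ℝ) A).map (mulVec.addMonoidHomLeft v)
    (continuous_id.matrix_mulVec continuous_const)
  have hpow (k : ℕ) : A ^ k *ᵥ v = μ ^ k • v := by
    induction k with
    | zero => simp
    | succ k ih => rw [pow_succ, ← mulVec_mulVec, h, mulVec_smul, ih, smul_smul, pow_succ']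
  have hμ := (exp_series_hasSum_exp' (𝕂 := ℝ) μ).smul_const v
  rw [← Real.exp_eq_exp_ℝ] at hμ
  refine hA.unique (hμ.congr_fun fun k => ?_)
  simp [mulVec.addMonoidHomLeft, smul_mulVec, hpow, smul_smul]

theorem exp_mem_rowStochastic {Q : Matrix n n ℝ} (hQ : Q *ᵥ 1 = 0)
    (hnonneg : ∀ i j, 0 ≤ exp Q i j) : exp Q ∈ rowStochastic ℝ n := by
  refine ⟨hnonneg, ?_⟩
  simpa using exp_mulVec_of_mulVec_eq_smul (μ := 0) (by rw [hQ, zero_smul])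

theorem abs_le_one_of_mulVec_eq_smul {P : Matrix n n ℝ} (hP : P ∈ rowStochastic ℝ n)
    {f : n → ℝ} {r : ℝ} (hf : P *ᵥ f = r • f) (hf0 : f ≠ 0) : |r| ≤ 1 := by
  obtain ⟨j, hj⟩ := Function.ne_iff.mp hf0
  obtain ⟨i, -, hi⟩ := exists_max_image univ (fun j => |f j|) ⟨j, mem_univ j⟩
  have hfi : 0 < |f i| := (abs_pos.mpr hj).trans_le (hi j (mem_univ j))
  refine le_of_mul_le_mul_right ?_ hfi
  calc |r| * |f i| = |∑ j, P i j * f j| := by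
        rw [← abs_mul, ← smul_eq_mul, ← Pi.smul_apply, ← hf]; rfl
    _ ≤ ∑ j, P i j * |f j| := by
        refine (abs_sum_le_sum_abs _ _).trans_eq (sum_congr rfl fun j _ => ?_)
        rw [abs_mul, abs_of_nonneg (nonneg_of_mem_rowStochastic hP)]
    _ ≤ ∑ j, P i j * |f i| :=
        sum_le_sum fun j _ => mul_le_mul_of_nonneg_left (hi j (mem_univ j))
          (nonneg_of_mem_rowStochastic hP)
    _ = 1 * |f i| := by rw [← sum_mul, sum_row_of_mem_rowStochastic hP]

theorem apply_eq_apply_of_mulVec_eq_self {P : Matrix n n ℝ} (hP : P ∈ rowStochastic ℝ n)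
    (hpos : ∀ i j, 0 < P i j) {f : n → ℝ} (hf : P *ᵥ f = f) (i j : n) : f i = f j := by
  obtain ⟨k, -, hk⟩ := exists_max_image univ f ⟨i, mem_univ i⟩
  suffices ∀ j, f j = f k by rw [this i, this j]
  by_contra! ⟨j, hj⟩
  have hlt : ∑ l, P k l * f l < ∑ l, P k l * f k :=
    sum_lt_sum (fun l _ => mul_le_mul_of_nonneg_left (hk l (mem_univ l)) (hpos k l).le)
      ⟨j, mem_univ j, mul_lt_mul_of_pos_left ((hk j (mem_univ j)).lt_of_ne hj) (hpos k j)⟩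
  rw [← sum_mul, sum_row_of_mem_rowStochastic hP, one_mul] at hlt
  exact hlt.ne (congrFun hf k)

theorem diagonal_mul_diagonal_inv {d : n → ℝ} (hd : ∀ i, d i ≠ 0) :
    diagonal d * diagonal d⁻¹ = 1 := by
  rw [diagonal_mul_diagonal, ← diagonal_one]
  exact congrArg diagonal (funext fun i => mul_inv_cancel₀ (hd i))

theorem diagonal_inv_mul_diagonal {d : n → ℝ} (hd : ∀ i, d i ≠ 0) :
    diagonal d⁻¹ * diagonal d = 1 := by
  simpa using diagonal_mul_diagonal_inv (d := d⁻¹) (fun i => inv_ne_zero (hd i))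

theorem exp_diagonal_mul_mul_diagonal_inv_apply_self {d : n → ℝ} (hd : ∀ i, d i ≠ 0)
    (M : Matrix n n ℝ) (i : n) : exp (diagonal d * M * diagonal d⁻¹) i i = exp M i i := by
  let D : (Matrix n n ℝ)ˣ :=
    ⟨diagonal d, diagonal d⁻¹, diagonal_mul_diagonal_inv hd, diagonal_inv_mul_diagonal hd⟩
  have hconj : exp (diagonal d * M * diagonal d⁻¹) = diagonal d * exp M * diagonal d⁻¹ :=
    exp_units_conj D M
  rw [hconj, mul_diagonal, diagonal_mul, Pi.inv_apply, mul_right_comm, mul_inv_cancel₀ (hd i),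
    one_mul]

theorem mulVec_eq_smul_of_diagonal_conj {d : n → ℝ} (hd : ∀ i, d i ≠ 0) {M : Matrix n n ℝ}
    {u : n → ℝ} {μ : ℝ} (h : (diagonal d * M * diagonal d⁻¹) *ᵥ u = μ • u) :
    M *ᵥ (d⁻¹ * u) = μ • (d⁻¹ * u) := by
  have hu : d⁻¹ * u = diagonal d⁻¹ *ᵥ u := funext fun i => (mulVec_diagonal _ _ i).symm
  rw [hu, ← mulVec_smul, ← h, mulVec_mulVec, mulVec_mulVec, ← mul_assoc, ← mul_assoc,
    diagonal_inv_mul_diagonal hd, one_mul]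

theorem IsHermitian.exists_eigenvalues_eq_zero {𝕜 : Type*} [RCLike 𝕜] {A : Matrix n n 𝕜}
    (hA : A.IsHermitian) {v : n → 𝕜} (hv : v ≠ 0) (h : A *ᵥ v = 0) :
    ∃ m, hA.eigenvalues m = 0 := by
  have hdet : A.det = 0 := exists_mulVec_eq_zero_iff.mp ⟨v, hv, h⟩
  simpa [hA.det_eq_prod_eigenvalues, prod_eq_zero_iff] using hdet

theorem IsHermitian.eigenvectorBasis_ne_zero {𝕜 : Type*} [RCLike 𝕜] {A : Matrix n n 𝕜}
    (hA : A.IsHermitian) (m : n) : ⇑(hA.eigenvectorBasis m) ≠ 0 :=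
  fun h => hA.eigenvectorBasis.orthonormal.ne_zero m (by ext i; simpa using congrFun h i)

theorem IsHermitian.sum_eigenvectorBasis_mul {A : Matrix n n ℝ} (hA : A.IsHermitian) (m m' : n) :
    ∑ i, hA.eigenvectorBasis m i * hA.eigenvectorBasis m' i = if m = m' then 1 else 0 := by
  rw [← orthonormal_iff_ite.mp hA.eigenvectorBasis.orthonormal m m', PiLp.inner_apply]
  simp [mul_comm]

theorem IsHermitian.exp_smul_apply_self {A : Matrix n n ℝ} (hA : A.IsHermitian) (t : ℝ) (i : n) :
    NormedSpace.exp (t • A) i i =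
      ∑ m, hA.eigenvectorBasis m i ^ 2 * Real.exp (t * hA.eigenvalues m) := by
  set U : Matrix n n ℝ := (hA.eigenvectorUnitary : Matrix n n ℝ)
  have hcol (m : n) : (NormedSpace.exp (t • A) * U) i m =
      Real.exp (t * hA.eigenvalues m) * U i m := by
    have hm : (t • A) *ᵥ hA.eigenvectorBasis m =
        (t * hA.eigenvalues m) • hA.eigenvectorBasis m := by
      rw [smul_mulVec, hA.mulVec_eigenvectorBasis, smul_smul]
    exact congrFun (exp_mulVec_of_mulVec_eq_smul hm) i
  calc NormedSpace.exp (t • A) i i = (NormedSpace.exp (t • A) * U * star U) i i := by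
        rw [mul_assoc, mem_unitaryGroup_iff.mp hA.eigenvectorUnitary.2, mul_one]
    _ = _ := by
        simp only [mul_apply (M := NormedSpace.exp (t • A) * U), hcol, star_apply, star_trivial, U,
          eigenvectorUnitary_apply]
        exact sum_congr rfl fun m _ => by ring

end Matrix

theorem Fintype.exists_monotone_enumeration {ι α M : Type*} [Fintype ι] [Nonempty ι]
    [LinearOrder α] [AddCommMonoid M] (ρ : ι → α) :
    ∃ enum : ℕ → ι, (∀ m, m + 1 < card ι → ρ (enum m) ≤ ρ (enum (m + 1))) ∧
      ∀ f : ι → M, ∑ i, f i = ∑ m ∈ range (card ι), f (enum m) := by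
  let g := (equivFin ι).symm
  let τ := Tuple.sort (ρ ∘ g)
  have hmono : Monotone (ρ ∘ g ∘ τ) := Tuple.monotone_sort (ρ ∘ g)
  let enum : ℕ → ι := fun m => if h : m < card ι then g (τ ⟨m, h⟩) else Classical.arbitrary ι
  refine ⟨enum, fun m hm => ?_, fun f => ?_⟩
  · simp only [enum, dif_pos hm, dif_pos (Nat.lt_of_succ_lt hm)]
    exact hmono (Fin.mk_le_mk.mpr m.le_succ)
  · calc ∑ i, f i = ∑ k, f (g (τ k)) := ((τ.trans g).sum_comp f).symm
      _ = ∑ k : Fin (card ι), f (enum k) := Fintype.sum_congr _ _ fun k => by simp [enum]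
      _ = ∑ m ∈ range (card ι), f (enum m) := Fin.sum_univ_eq_sum_range (fun m => f (enum m)) _

theorem strictAnti_sum_mul_exp {n : ℕ} {lam c : ℕ → ℝ} (hlam : ∀ m < n, 0 < lam m)
    (hc : ∀ m < n, 0 ≤ c m) (hn : 0 < n) (hc0 : 0 < c 0) :
    StrictAnti fun t => ∑ m ∈ range n, c m * Real.exp (-lam m * t) := by
  intro t t' htt'
  refine sum_lt_sum (fun m hm => ?_) ⟨0, mem_range.mpr hn, ?_⟩
  · have hm := mem_range.mp hm
    exact mul_le_mul_of_nonneg_left (Real.exp_le_exp.mpr (by nlinarith [hlam m hm])) (hc m hm)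
  · exact mul_lt_mul_of_pos_left (Real.exp_lt_exp.mpr (by nlinarith [hlam 0 hn])) hc0

theorem sqrt_ne_zero_of_pos {S : Type*} {π : S → ℝ} (hπ : ∀ i, 0 < π i) (i : S) : √(π i) ≠ 0 :=
  (Real.sqrt_pos.mpr (hπ i)).ne'

theorem sum_mul_sqrt_mul_mul_sqrt {S : Type*} [Fintype S] {π : S → ℝ} (hπ : ∀ i, 0 < π i)
    (hπ1 : ∑ i, π i = 1) (c c' : ℝ) :
    ∑ i, c * √(π i) * (c' * √(π i)) = c * c' := by
  have (i : S) : c * √(π i) * (c' * √(π i)) = c * c' * π i := by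
    linear_combination c * c' * Real.mul_self_sqrt (hπ i).le
  rw [sum_congr rfl fun i _ => this i, ← mul_sum, hπ1, mul_one]

section Symmetrization

variable {S : Type*} [Fintype S] [DecidableEq S] {π : S → ℝ} {Q : Matrix S S ℝ}

noncomputable def symmetrizedGenerator (π : S → ℝ) (Q : Matrix S S ℝ) : Matrix S S ℝ :=
  diagonal (fun i => √(π i)) * Q * diagonal (fun i => √(π i))⁻¹

theorem symmetrizedGenerator_apply (π : S → ℝ) (Q : Matrix S S ℝ) (i j : S) :
    symmetrizedGenerator π Q i j = √(π i) * Q i j / √(π j) := by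
  simp [symmetrizedGenerator, mul_diagonal, diagonal_mul, div_eq_mul_inv]

theorem symmetrizedGenerator_isHermitian (hπ : ∀ i, 0 < π i)
    (hrev : ∀ i j, π i * Q i j = π j * Q j i) : (symmetrizedGenerator π Q).IsHermitian := by
  ext i j
  rw [conjTranspose_apply, star_trivial, symmetrizedGenerator_apply, symmetrizedGenerator_apply,
    div_eq_div_iff (sqrt_ne_zero_of_pos hπ i) (sqrt_ne_zero_of_pos hπ j)]
  have := hrev j i
  rw [← Real.sq_sqrt (hπ i).le, ← Real.sq_sqrt (hπ j).le] at this
  linear_combination this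

theorem exp_smul_symmetrizedGenerator_apply_self (hπ : ∀ i, 0 < π i) (t : ℝ) (i : S) :
    exp (t • symmetrizedGenerator π Q) i i = exp (t • Q) i i := by
  rw [symmetrizedGenerator, ← smul_mul_assoc, ← mul_smul_comm,
    exp_diagonal_mul_mul_diagonal_inv_apply_self (sqrt_ne_zero_of_pos hπ)]

theorem symmetrizedGenerator_mulVec_sqrt (hπ : ∀ i, 0 < π i) (hQ : Q *ᵥ 1 = 0) :
    symmetrizedGenerator π Q *ᵥ (fun i => √(π i)) = 0 := by
  have h1 : diagonal (fun i => √(π i))⁻¹ *ᵥ (fun i => √(π i)) = 1 :=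
    funext fun i => by simp [mulVec_diagonal, sqrt_ne_zero_of_pos hπ i]
  rw [symmetrizedGenerator, ← mulVec_mulVec, h1, ← mulVec_mulVec, hQ, mulVec_zero]

end Symmetrization

section Spectrum

variable {S : Type*} [Fintype S] [DecidableEq S] {π : S → ℝ} {Q : Matrix S S ℝ}
  (hA : (symmetrizedGenerator π Q).IsHermitian)

/-- The coefficient `c_m = ∑ᵢ πᵢ u_{im}²` of the paper. -/
noncomputable def spectralWeight (m : S) : ℝ := ∑ i, π i * hA.eigenvectorBasis m i ^ 2

theorem sum_mul_exp_smul_apply_self (hπ : ∀ i, 0 < π i) (t : ℝ) :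
    ∑ i, π i * exp (t • Q) i i = ∑ m, spectralWeight hA m * Real.exp (t * hA.eigenvalues m) := by
  calc ∑ i, π i * exp (t • Q) i i
      = ∑ i, π i * ∑ m, hA.eigenvectorBasis m i ^ 2 * Real.exp (t * hA.eigenvalues m) :=
        sum_congr rfl fun i _ => by
          rw [← exp_smul_symmetrizedGenerator_apply_self hπ, hA.exp_smul_apply_self]
    _ = _ := by
        simp_rw [mul_sum, spectralWeight, sum_mul, mul_assoc]
        exact sum_comm

theorem spectralWeight_pos (hπ : ∀ i, 0 < π i) (m : S) : 0 < spectralWeight hA m := by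
  obtain ⟨i, hi⟩ := Function.ne_iff.mp (hA.eigenvectorBasis_ne_zero m)
  exact sum_pos' (fun j _ => mul_nonneg (hπ j).le (sq_nonneg _))
    ⟨i, mem_univ i, mul_pos (hπ i) (sq_pos_of_ne_zero hi)⟩

theorem exp_mulVec_eigenvectorBasis_div_sqrt (hπ : ∀ i, 0 < π i) (m : S) :
    exp Q *ᵥ ((fun i => √(π i))⁻¹ * ⇑(hA.eigenvectorBasis m)) =
      Real.exp (hA.eigenvalues m) • ((fun i => √(π i))⁻¹ * ⇑(hA.eigenvectorBasis m)) :=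
  exp_mulVec_of_mulVec_eq_smul <|
    mulVec_eq_smul_of_diagonal_conj (sqrt_ne_zero_of_pos hπ) (hA.mulVec_eigenvectorBasis m)

theorem eigenvalues_nonpos (hπ : ∀ i, 0 < π i) (hP : exp Q ∈ rowStochastic ℝ S) (m : S) :
    hA.eigenvalues m ≤ 0 := by
  have hf0 : (fun i => √(π i))⁻¹ * ⇑(hA.eigenvectorBasis m) ≠ 0 := by
    obtain ⟨i, hi⟩ := Function.ne_iff.mp (hA.eigenvectorBasis_ne_zero m)
    exact Function.ne_iff.mpr ⟨i, mul_ne_zero (inv_ne_zero (sqrt_ne_zero_of_pos hπ i)) hi⟩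
  have := abs_le_one_of_mulVec_eq_smul hP (exp_mulVec_eigenvectorBasis_div_sqrt hA hπ m) hf0
  rwa [abs_of_pos (Real.exp_pos _), Real.exp_le_one_iff] at this

theorem eigenvectorBasis_eq_mul_sqrt_of_eigenvalues_eq_zero (hπ : ∀ i, 0 < π i)
    (hπ1 : ∑ i, π i = 1) (hP : exp Q ∈ rowStochastic ℝ S) (hpos : ∀ i j, 0 < exp Q i j)
    {m : S} (hm : hA.eigenvalues m = 0) :
    ∃ c : ℝ, c ^ 2 = 1 ∧ ∀ i, hA.eigenvectorBasis m i = c * √(π i) := by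
  set f := (fun i => √(π i))⁻¹ * ⇑(hA.eigenvectorBasis m)
  have hf : exp Q *ᵥ f = f := by
    simpa [hm] using exp_mulVec_eigenvectorBasis_div_sqrt hA hπ m
  have hb (i : S) : hA.eigenvectorBasis m i = f m * √(π i) := by
    rw [apply_eq_apply_of_mulVec_eq_self hP hpos hf m i]
    simp only [f, Pi.mul_apply, Pi.inv_apply]
    rw [mul_right_comm, inv_mul_cancel₀ (sqrt_ne_zero_of_pos hπ i), one_mul]
  refine ⟨f m, ?_, hb⟩
  have := hA.sum_eigenvectorBasis_mul m m
  simp only [hb, ite_true, sum_mul_sqrt_mul_mul_sqrt hπ hπ1] at this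
  rwa [sq]

theorem eq_of_eigenvalues_eq_zero (hπ : ∀ i, 0 < π i) (hπ1 : ∑ i, π i = 1)
    (hP : exp Q ∈ rowStochastic ℝ S) (hpos : ∀ i j, 0 < exp Q i j) {m m' : S}
    (hm : hA.eigenvalues m = 0) (hm' : hA.eigenvalues m' = 0) : m = m' := by
  obtain ⟨c, hc, hb⟩ := eigenvectorBasis_eq_mul_sqrt_of_eigenvalues_eq_zero hA hπ hπ1 hP hpos hm
  obtain ⟨c', hc', hb'⟩ :=
    eigenvectorBasis_eq_mul_sqrt_of_eigenvalues_eq_zero hA hπ hπ1 hP hpos hm'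
  by_contra hne
  have := hA.sum_eigenvectorBasis_mul m m'
  simp only [hb, hb', if_neg hne, sum_mul_sqrt_mul_mul_sqrt hπ hπ1] at this
  nlinarith

theorem spectralWeight_of_eigenvalues_eq_zero (hπ : ∀ i, 0 < π i) (hπ1 : ∑ i, π i = 1)
    (hP : exp Q ∈ rowStochastic ℝ S) (hpos : ∀ i j, 0 < exp Q i j) {m : S}
    (hm : hA.eigenvalues m = 0) : spectralWeight hA m = ∑ i, π i ^ 2 := by
  obtain ⟨c, hc, hb⟩ := eigenvectorBasis_eq_mul_sqrt_of_eigenvalues_eq_zero hA hπ hπ1 hP hpos hm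
  refine sum_congr rfl fun i _ => ?_
  rw [hb, mul_pow, Real.sq_sqrt (hπ i).le, hc]
  ring

theorem sum_mul_exp_smul_apply_self_eq_add (hπ : ∀ i, 0 < π i) (hπ1 : ∑ i, π i = 1)
    (hP : exp Q ∈ rowStochastic ℝ S) (hpos : ∀ i j, 0 < exp Q i j) {m₀ : S}
    (hm₀ : hA.eigenvalues m₀ = 0) (t : ℝ) :
    ∑ i, π i * exp (t • Q) i i = ∑ i, π i ^ 2 +
      ∑ m : {m // m ≠ m₀}, spectralWeight hA m * Real.exp (t * hA.eigenvalues m) := by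
  rw [sum_mul_exp_smul_apply_self hA hπ, Fintype.sum_eq_add_sum_subtype_ne _ m₀, hm₀,
    spectralWeight_of_eigenvalues_eq_zero hA hπ hπ1 hP hpos hm₀, mul_zero, Real.exp_zero, mul_one]

end Spectrum

theorem reversible_agreement_probability_spectral_general {S : Type*} [Fintype S] [DecidableEq S]
    (Q : Matrix S S ℝ) (π : S → ℝ)
    (hcard : 1 < Fintype.card S)
    (hQrow : ∀ i, ∑ j, Q i j = 0)
    (hπpos : ∀ i, 0 < π i) (hπ1 : ∑ i, π i = 1)
    (hrev : ∀ i j, π i * Q i j = π j * Q j i)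
    (hirr : ∀ t : ℝ, 0 < t → ∀ i j, 0 < NormedSpace.exp (t • Q) i j)
    (e : ℝ → ℝ) (he : ∀ t, e t = ∑ i, π i * NormedSpace.exp (t • Q) i i) :
    (∃ n : ℕ, 0 < n ∧ ∃ lam c : ℕ → ℝ,
      (∀ m < n, 0 < lam m) ∧ (∀ m, m + 1 < n → lam m ≤ lam (m + 1)) ∧
      (∀ m < n, 0 ≤ c m) ∧ 0 < c 0 ∧
      (∀ t : ℝ, 0 ≤ t →
        e t = ∑ i, (π i) ^ 2 + ∑ m ∈ Finset.range n, c m * Real.exp (-(lam m) * t)))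
    ∧ (∀ t t' : ℝ, 0 ≤ t → t < t' → e t' < e t) := by
  have hQ : Q *ᵥ 1 = 0 := funext fun i => by simp [mulVec, dotProduct, hQrow i]
  have hpos : ∀ i j, 0 < exp Q i j := by simpa using hirr 1 one_pos
  have hP := exp_mem_rowStochastic hQ fun i j => (hpos i j).le
  have hA := symmetrizedGenerator_isHermitian hπpos hrev
  obtain ⟨i₀⟩ : Nonempty S := Fintype.card_pos_iff.mp (by omega)
  obtain ⟨m₀, hm₀⟩ := hA.exists_eigenvalues_eq_zero
    (Function.ne_iff.mpr ⟨i₀, sqrt_ne_zero_of_pos hπpos i₀⟩)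
    (symmetrizedGenerator_mulVec_sqrt hπpos hQ)
  have : Nonempty {m // m ≠ m₀} :=
    nonempty_subtype.mpr (Fintype.exists_ne_of_one_lt_card hcard m₀)
  obtain ⟨enum, hmono, hsum⟩ :=
    Fintype.exists_monotone_enumeration (M := ℝ) fun m : {m // m ≠ m₀} => -hA.eigenvalues m
  have hlam (m : {m // m ≠ m₀}) : 0 < -hA.eigenvalues m :=
    neg_pos.mpr <| (eigenvalues_nonpos hA hπpos hP m).lt_of_ne fun h =>
      m.2 (eq_of_eigenvalues_eq_zero hA hπpos hπ1 hP hpos h hm₀)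
  have hc (m : S) := spectralWeight_pos hA hπpos m
  have hformula (t : ℝ) : e t = ∑ i, π i ^ 2 + ∑ k ∈ range (Fintype.card {m // m ≠ m₀}),
      spectralWeight hA (enum k) * Real.exp (-(-hA.eigenvalues (enum k)) * t) := by
    rw [he, sum_mul_exp_smul_apply_self_eq_add hA hπpos hπ1 hP hpos hm₀, hsum]
    simp only [neg_neg, mul_comm t]
  refine ⟨⟨_, Fintype.card_pos, _, _, fun k _ => hlam _, hmono, fun k _ => (hc _).le, hc _,
    fun t _ => hformula t⟩, fun t t' _ htt' => ?_⟩
  simpa only [hformula, add_lt_add_iff_left] using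
    strictAnti_sum_mul_exp (fun k _ => hlam _) (fun k _ => (hc _).le) Fintype.card_pos (hc _) htt'

theorem reversible_agreement_probability_spectral {S : Type*} [Fintype S] [DecidableEq S]
    (Q : Matrix S S ℝ) (π : S → ℝ)
    (hcard : 1 < Fintype.card S)
    (hQoff : ∀ i j, i ≠ j → 0 ≤ Q i j)
    (hQrow : ∀ i, ∑ j, Q i j = 0)
    (hπpos : ∀ i, 0 < π i) (hπ1 : ∑ i, π i = 1)
    (hrev : ∀ i j, π i * Q i j = π j * Q j i)
    (hirr : ∀ t : ℝ, 0 < t → ∀ i j, 0 < NormedSpace.exp (t • Q) i j)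
    (e : ℝ → ℝ) (he : ∀ t, e t = ∑ i, π i * NormedSpace.exp (t • Q) i i) :
    (∃ n : ℕ, 0 < n ∧ ∃ lam c : ℕ → ℝ,
      (∀ m < n, 0 < lam m) ∧ (∀ m, m + 1 < n → lam m ≤ lam (m + 1)) ∧
      (∀ m < n, 0 ≤ c m) ∧ 0 < c 0 ∧
      (∀ t : ℝ, 0 ≤ t →
        e t = ∑ i, (π i) ^ 2 + ∑ m ∈ Finset.range n, c m * Real.exp (-(lam m) * t)))
    ∧ (∀ t t' : ℝ, 0 ≤ t → t < t' → e t' < e t) :=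
  reversible_agreement_probability_spectral_general Q π hcard hQrow hπpos hπ1 hrev hirr e he
end
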